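/- Let γ ∈ (0,2) and let L be slowly varying at infinity. Suppose there exist positive constants C₁ and C₂ such that G(x) ≤ C₁·x^{2−γ}·L(1/x) for all x ∈ (0,π] and V(n) ≥ C₂·n^γ·L(n) for every integer n ≥ 1. Then there exist C₃ > 0 and x₀ > 0 such that G(x) ≥ C₃·x^{2−γ}·L(1/x) for all x ∈ (0, x₀]. -/

import Mathlib

open MeasureTheory Filter Set Topology

/-- Fejér-type kernel: `I_n(y) = sin²(ny/2)/sin²(y/2)` for `y ≠ 0`, `I_n(0) = n²`. -/
noncomputable def fejerKernel (n : ℕ) (y : ℝ) : ℝ :=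
  if y = 0 then (n : ℝ) ^ 2 else Real.sin (n * y / 2) ^ 2 / Real.sin (y / 2) ^ 2

/-- Variance functional `V(n) = ∫_{[0,π]} I_n(y) dμ(y)`. -/
noncomputable def varV (μ : Measure ℝ) (n : ℕ) : ℝ :=
  ∫ y in Icc 0 Real.pi, fejerKernel n y ∂μ

/-- `G(x) = μ([0,x])` for a measure `μ` on `[0,π]`. -/
noncomputable def specG (μ : Measure ℝ) (x : ℝ) : ℝ :=
  (μ (Icc 0 x)).toReal

/-- A function `L : (0,∞) → (0,∞)` is slowly varying at infinity if
`L(λx)/L(x) → 1` as `x → ∞` for every `λ > 0`. -/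
def SlowlyVarying (L : ℝ → ℝ) : Prop :=
  ∀ lam : ℝ, 0 < lam → Tendsto (fun x => L (lam * x) / L x) atTop (𝓝 1)

open scoped ENNReal

/-!
Split `V(n)` at `a = A / n`. On `[0, a]` the kernel is at most `n²`, which contributes
`n² G(A / n)`. On the dyadic shells `(2ᵏ a, 2ᵏ⁺¹ a]` below a fixed level `c` we use
`I_n(y) ≤ π² / y²`, the upper bound on `G`, and Potter's bound
`L(1 / y) ≤ C (n y)^{γ/2} L(n)`; the shells then sum geometrically to
`O(A^{-γ/2}) n^γ L(n)`. Above `c` the kernel is bounded, contributing `O(1) = o(n^γ L(n))`.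
For `A` large, the lower bound on `V(n)` forces `n² G(A / n) ≥ (C₂ / 2) n^γ L(n)`, and Potter's
bound once more turns this into the claim at every small `x`, with `n = ⌈A / x⌉`.
Potter's bound itself follows from the uniform convergence theorem for the measurable function
`t ↦ log L(eᵗ)`.
-/

lemma abs_sin_nat_mul_le (n : ℕ) (t : ℝ) : |Real.sin (n * t)| ≤ n * |Real.sin t| := by
  induction n with
  | zero => simp
  | succ k ih =>
    rw [Nat.cast_succ, add_mul, one_mul, Real.sin_add]
    calc |Real.sin (k * t) * Real.cos t + Real.cos (k * t) * Real.sin t|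
        ≤ |Real.sin (k * t)| * |Real.cos t| + |Real.cos (k * t)| * |Real.sin t| := by
          rw [← abs_mul, ← abs_mul]; exact abs_add_le _ _
      _ ≤ k * |Real.sin t| * 1 + 1 * |Real.sin t| := by
          gcongr
          exacts [Real.abs_cos_le_one _, Real.abs_cos_le_one _]
      _ = (k + 1) * |Real.sin t| := by ring

lemma fejerKernel_nonneg (n : ℕ) (y : ℝ) : 0 ≤ fejerKernel n y := by
  unfold fejerKernel; split <;> positivity

lemma fejerKernel_le_sq (n : ℕ) (y : ℝ) : fejerKernel n y ≤ (n : ℝ) ^ 2 := by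
  unfold fejerKernel
  split_ifs
  · exact le_rfl
  · apply div_le_of_le_mul₀ (sq_nonneg _) (sq_nonneg _)
    rw [← sq_abs, ← sq_abs (Real.sin _), ← mul_pow, mul_div_assoc]
    gcongr
    exact abs_sin_nat_mul_le n (y / 2)

lemma fejerKernel_le_pi_sq_div_sq (n : ℕ) {y : ℝ} (hy : 0 < y) (hyπ : y ≤ Real.pi) :
    fejerKernel n y ≤ Real.pi ^ 2 / y ^ 2 := by
  have hsin : y / Real.pi ≤ Real.sin (y / 2) := by
    have := Real.mul_le_sin (x := y / 2) (by positivity) (by linarith)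
    rwa [show 2 / Real.pi * (y / 2) = y / Real.pi by ring] at this
  rw [fejerKernel, if_neg hy.ne']
  calc Real.sin (n * y / 2) ^ 2 / Real.sin (y / 2) ^ 2 ≤ 1 / (y / Real.pi) ^ 2 :=
        div_le_div₀ zero_le_one (Real.sin_sq_le_one _) (by positivity)
          (pow_le_pow_left₀ (by positivity) hsin 2)
    _ = Real.pi ^ 2 / y ^ 2 := by rw [div_pow, one_div_div]

lemma measurable_fejerKernel (n : ℕ) : Measurable (fejerKernel n) := by
  unfold fejerKernel
  exact Measurable.ite (measurableSet_singleton 0) measurable_const (by fun_prop)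

lemma specG_mono (μ : Measure ℝ) [IsFiniteMeasure μ] : Monotone (specG μ) := fun _ _ h =>
  ENNReal.toReal_mono (measure_ne_top μ _) (measure_mono (Icc_subset_Icc_right h))

section FiniteMeasure

variable {μ : Measure ℝ} [IsFiniteMeasure μ]

lemma integrable_fejerKernel (n : ℕ) : Integrable (fejerKernel n) μ :=
  (integrable_const ((n : ℝ) ^ 2)).mono' (measurable_fejerKernel n).aestronglyMeasurable
    (Eventually.of_forall fun y => by
      rw [Real.norm_of_nonneg (fejerKernel_nonneg n y)]; exact fejerKernel_le_sq n y)

lemma setIntegral_fejerKernel_le {n : ℕ} {s : Set ℝ} {c : ℝ}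
    (hc : ∀ y ∈ s, fejerKernel n y ≤ c) : ∫ y in s, fejerKernel n y ∂μ ≤ c * μ.real s :=
  (le_abs_self _).trans <| norm_setIntegral_le_of_norm_le_const (measure_lt_top μ s)
    fun y hy => (Real.norm_of_nonneg (fejerKernel_nonneg n y)).trans_le (hc y hy)

lemma setIntegral_fejerKernel_Ioc_le (n : ℕ) {c d : ℝ} (hc : 0 < c) (hd : d ≤ Real.pi) :
    ∫ y in Ioc c d, fejerKernel n y ∂μ ≤ Real.pi ^ 2 / c ^ 2 * specG μ d := by
  refine (setIntegral_fejerKernel_le (c := Real.pi ^ 2 / c ^ 2) fun y hy => ?_).trans ?_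
  · exact (fejerKernel_le_pi_sq_div_sq n (hc.trans hy.1) (hy.2.trans hd)).trans
      (by gcongr; exact hy.1.le)
  · gcongr
    exact measureReal_mono fun y hy => ⟨hc.le.trans hy.1.le, hy.2⟩

lemma setIntegral_fejerKernel_Ioc_dyadic_le (n : ℕ) {a : ℝ} (ha : 0 < a) :
    ∀ K : ℕ, (2 : ℝ) ^ K * a ≤ Real.pi →
      ∫ y in Ioc a (2 ^ K * a), fejerKernel n y ∂μ ≤
        ∑ k ∈ Finset.range K, Real.pi ^ 2 / (2 ^ k * a) ^ 2 * specG μ (2 ^ (k + 1) * a)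
  | 0, _ => by simp
  | K + 1, hK => by
    have hstep : (2 : ℝ) ^ K * a ≤ 2 ^ (K + 1) * a := by gcongr <;> norm_num
    rw [← Ioc_union_Ioc_eq_Ioc (le_mul_of_one_le_left ha.le (one_le_pow₀ one_le_two)) hstep,
      setIntegral_union (Ioc_disjoint_Ioc_of_le le_rfl) measurableSet_Ioc
        (integrable_fejerKernel n).integrableOn (integrable_fejerKernel n).integrableOn,
      Finset.sum_range_succ]
    exact add_le_add (setIntegral_fejerKernel_Ioc_dyadic_le n ha K (hstep.trans hK))
      (setIntegral_fejerKernel_Ioc_le n (by positivity) hK)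

lemma varV_le_dyadic (n : ℕ) {a : ℝ} (ha : 0 < a) {K : ℕ} (hK : (2 : ℝ) ^ K * a ≤ Real.pi) :
    varV μ n ≤ n ^ 2 * specG μ a
      + ∑ k ∈ Finset.range K, Real.pi ^ 2 / (2 ^ k * a) ^ 2 * specG μ (2 ^ (k + 1) * a)
      + Real.pi ^ 2 / (2 ^ K * a) ^ 2 * specG μ Real.pi := by
  have haK : a ≤ 2 ^ K * a := le_mul_of_one_le_left ha.le (one_le_pow₀ one_le_two)
  rw [varV, ← Icc_union_Ioc_eq_Icc ha.le (haK.trans hK),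
    setIntegral_union ((Iic_disjoint_Ioc le_rfl).mono_left Icc_subset_Iic_self) measurableSet_Ioc
      (integrable_fejerKernel n).integrableOn (integrable_fejerKernel n).integrableOn,
    ← Ioc_union_Ioc_eq_Ioc haK hK,
    setIntegral_union (Ioc_disjoint_Ioc_of_le le_rfl) measurableSet_Ioc
      (integrable_fejerKernel n).integrableOn (integrable_fejerKernel n).integrableOn,
    ← add_assoc]
  gcongr
  · exact setIntegral_fejerKernel_le fun y _ => fejerKernel_le_sq n y
  · exact setIntegral_fejerKernel_Ioc_dyadic_le n ha K hK
  · exact setIntegral_fejerKernel_Ioc_le n (by positivity) le_rfl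

end FiniteMeasure

section UniformConvergence

variable {h : ℝ → ℝ}

lemma eventually_lt_volume_setOf_forall_ge
    (hconv : ∀ u, Tendsto (fun t => h (t + u) - h t) atTop (𝓝 0)) {s : ℕ → ℝ}
    (hs : Tendsto s atTop atTop) {ε : ℝ} (hε : 0 < ε) {r : ℝ≥0∞} (hr : r < 2) :
    ∀ᶠ n in atTop, r < volume {v ∈ Icc (0 : ℝ) 2 | ∀ m ≥ n, |h (s m + v) - h (s m)| ≤ ε} := by
  set S : ℕ → Set ℝ := fun n => {v ∈ Icc (0 : ℝ) 2 | ∀ m ≥ n, |h (s m + v) - h (s m)| ≤ ε}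
  have hmono : Monotone S := fun n₁ n₂ hn v hv => ⟨hv.1, fun m hm => hv.2 m (hn.trans hm)⟩
  have hunion : ⋃ n, S n = Icc 0 2 := by
    refine Subset.antisymm (iUnion_subset fun n => sep_subset _ _) fun v hv => ?_
    have hsmall : ∀ᶠ m in atTop, |h (s m + v) - h (s m)| ≤ ε := by
      simpa using (((hconv v).comp hs).abs).eventually (ge_mem_nhds (by simpa using hε))
    obtain ⟨n, hn⟩ := eventually_atTop.1 hsmall
    exact mem_iUnion.2 ⟨n, hv, hn⟩
  have hlim := tendsto_measure_iUnion_atTop (μ := volume) hmono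
  rw [hunion, Real.volume_Icc, sub_zero, ENNReal.ofReal_ofNat] at hlim
  exact hlim.eventually_const_lt hr

/-- The uniform convergence theorem of slow variation, in additive form. -/
theorem exists_forall_abs_sub_le_of_tendsto (hm : Measurable h)
    (hconv : ∀ u, Tendsto (fun t => h (t + u) - h t) atTop (𝓝 0)) {ε : ℝ} (hε : 0 < ε) :
    ∃ X, ∀ t ≥ X, ∀ u ∈ Icc (0 : ℝ) 1, |h (t + u) - h t| ≤ ε := by
  by_contra! hcon
  choose T hT U hU hbad using fun m : ℕ => hcon m
  have hTtop : Tendsto T atTop atTop := tendsto_atTop_mono hT tendsto_natCast_atTop_atTop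
  have hTUtop : Tendsto (fun m => T m + U m) atTop atTop :=
    tendsto_atTop_mono (fun m => le_add_of_nonneg_right (hU m).1) hTtop
  have h32 : (3 / 2 : ℝ≥0∞) < 2 := by
    rw [ENNReal.div_lt_iff (by norm_num) (by norm_num)]; norm_num
  obtain ⟨n, hE, hF⟩ := ((eventually_lt_volume_setOf_forall_ge hconv hTtop (half_pos hε) h32).and
    (eventually_lt_volume_setOf_forall_ge hconv hTUtop (half_pos hε) h32)).exists
  set E := {v ∈ Icc (0 : ℝ) 2 | ∀ m ≥ n, |h (T m + v) - h (T m)| ≤ ε / 2}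
  set F := {v ∈ Icc (0 : ℝ) 2 | ∀ m ≥ n, |h (T m + U m + v) - h (T m + U m)| ≤ ε / 2}
  -- `E` and the translate `F + U n` both have measure `> 3/2` inside `[0, 3]`, so they meet.
  have hFmeas : MeasurableSet ((· + -U n) ⁻¹' F) := by
    refine measurable_add_const _ <| measurableSet_Icc.inter <| Measurable.setOf <|
      Measurable.forall fun _ => measurable_const.imp <| measurableSet_setOfPred.1 <|
        measurableSet_le ((hm.comp (measurable_const_add _)).sub_const _).abs measurable_const
  have hvol : volume (Icc (0 : ℝ) 3) < volume E + volume ((· + -U n) ⁻¹' F) := by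
    rw [measure_preimage_add_right, Real.volume_Icc, sub_zero,
      show ENNReal.ofReal 3 = 3 / 2 + 3 / 2 by rw [ENNReal.add_halves]; simp]
    exact ENNReal.add_lt_add hE hF
  obtain ⟨v, hvE, hvF⟩ := nonempty_inter_of_measure_lt_add volume (s := E) (u := Icc 0 3) hFmeas
    (fun v hv => ⟨hv.1.1, by linarith [hv.1.2]⟩)
    (fun v hv => ⟨by linarith [hv.1.1, (hU n).1], by linarith [hv.1.2, (hU n).2]⟩) hvol
  have h1 := hvE.2 n le_rfl
  have h2 := hvF.2 n le_rfl
  rw [show T n + U n + (v + -U n) = T n + v by ring] at h2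
  have := abs_sub_le (h (T n + U n)) (h (T n + v)) (h (T n))
  rw [abs_sub_comm] at h2
  linarith [hbad n]

lemma abs_sub_le_mul_of_forall_Icc {X ε : ℝ}
    (hX : ∀ t ≥ X, ∀ u ∈ Icc (0 : ℝ) 1, |h (t + u) - h t| ≤ ε) {t d : ℝ} (ht : X ≤ t)
    (hd : 0 ≤ d) : |h (t + d) - h t| ≤ (d + 1) * ε := by
  have hε : 0 ≤ ε := by simpa using hX X le_rfl 0 ⟨le_rfl, zero_le_one⟩
  have key : ∀ k : ℕ, ∀ t ≥ X, ∀ d ∈ Icc (0 : ℝ) (k + 1), |h (t + d) - h t| ≤ (k + 1) * ε := by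
    intro k
    induction k with
    | zero => simpa using hX
    | succ k ih =>
      intro t ht d hd
      rcases le_or_gt d 1 with hd1 | hd1
      · exact (hX t ht d ⟨hd.1, hd1⟩).trans
          (le_mul_of_one_le_left hε (by push_cast; linarith [k.cast_nonneg (α := ℝ)]))
      · have h1 := ih (t + 1) (by linarith) (d - 1)
          ⟨by linarith, by push_cast at hd ⊢; linarith [hd.2]⟩
        have h2 := hX t ht 1 ⟨zero_le_one, le_rfl⟩
        rw [show t + 1 + (d - 1) = t + d by ring] at h1
        have := abs_sub_le (h (t + d)) (h (t + 1)) (h t)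
        push_cast
        linarith
  refine (key ⌊d⌋₊ t ht d ⟨hd, (Nat.lt_floor_add_one d).le⟩).trans ?_
  gcongr
  exact Nat.floor_le hd

end UniformConvergence

namespace SlowlyVarying

variable {L : ℝ → ℝ}

lemma tendsto_log_comp_exp_add_sub (hL : SlowlyVarying L) (hLpos : ∀ x > (0 : ℝ), 0 < L x)
    (u : ℝ) : Tendsto (fun t => Real.log (L (Real.exp (t + u))) - Real.log (L (Real.exp t)))
      atTop (𝓝 0) := by
  have hlim := ((Real.continuousAt_log one_ne_zero).tendsto.comp
    ((hL _ (Real.exp_pos u)).comp Real.tendsto_exp_atTop))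
  rw [Real.log_one] at hlim
  refine hlim.congr fun t => ?_
  simp only [Function.comp_apply, Real.exp_add, mul_comm (Real.exp t)]
  exact Real.log_div (hLpos _ (by positivity)).ne' (hLpos _ (Real.exp_pos t)).ne'

theorem exists_potter_bound (hL : SlowlyVarying L) (hLmeas : Measurable L)
    (hLpos : ∀ x > (0 : ℝ), 0 < L x) {δ : ℝ} (hδ : 0 < δ) :
    ∃ M > 0, ∃ C > 0, ∀ x y, M ≤ x → x ≤ y → L x ≤ C * (y / x) ^ δ * L y := by
  obtain ⟨X, hX⟩ := exists_forall_abs_sub_le_of_tendsto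
    (Real.measurable_log.comp (hLmeas.comp Real.measurable_exp))
    (hL.tendsto_log_comp_exp_add_sub hLpos) hδ
  refine ⟨Real.exp X, Real.exp_pos X, Real.exp δ, Real.exp_pos δ, fun x y hx hxy => ?_⟩
  have hx0 : 0 < x := (Real.exp_pos X).trans_le hx
  have hy0 : 0 < y := hx0.trans_le hxy
  have hd := abs_sub_le_mul_of_forall_Icc hX ((Real.le_log_iff_exp_le hx0).2 hx)
    (sub_nonneg.2 (Real.log_le_log hx0 hxy))
  simp only [add_sub_cancel, Function.comp_apply, Real.exp_log hx0, Real.exp_log hy0] at hd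
  rw [← Real.log_le_log_iff (hLpos x hx0) (by have := hLpos y hy0; positivity),
    Real.log_mul (by positivity) (hLpos y hy0).ne', Real.log_mul (by positivity) (by positivity),
    Real.log_exp, Real.log_rpow (div_pos hy0 hx0), Real.log_div hy0.ne' hx0.ne']
  linarith [(abs_le.1 hd).1]

end SlowlyVarying

section Potter

variable {L : ℝ → ℝ} {γ δ M C : ℝ}

lemma tendsto_rpow_mul_atTop_of_potter
    (hP : ∀ x y, M ≤ x → x ≤ y → L x ≤ C * (y / x) ^ δ * L y) (hM : 0 < M) (hC : 0 < C)
    (hLM : 0 < L M) (hδγ : δ < γ) : Tendsto (fun t => t ^ γ * L t) atTop atTop := by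
  refine tendsto_atTop_mono' _ ?_ ((tendsto_rpow_atTop (sub_pos.2 hδγ)).const_mul_atTop
    (show 0 < L M * M ^ δ / C by positivity))
  filter_upwards [eventually_ge_atTop M] with t ht
  have ht0 : 0 < t := hM.trans_le ht
  have hLM_le : L M * M ^ δ / C ≤ t ^ δ * L t := by
    have := hP M t le_rfl ht
    rw [Real.div_rpow ht0.le hM.le] at this
    rw [div_le_iff₀ hC]
    have hMδ : 0 < M ^ δ := by positivity
    calc L M * M ^ δ ≤ C * (t ^ δ / M ^ δ) * L t * M ^ δ := by gcongr
      _ = t ^ δ * L t * C := by field_simp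
  calc L M * M ^ δ / C * t ^ (γ - δ) ≤ t ^ δ * L t * t ^ (γ - δ) := by gcongr
    _ = t ^ γ * L t := by rw [mul_right_comm, ← Real.rpow_add ht0, add_sub_cancel]

lemma rpow_mul_le_of_potter (hP : ∀ x y, M ≤ x → x ≤ y → L x ≤ C * (y / x) ^ δ * L y)
    {y t : ℝ} (hy : 0 < y) (hMy : M ≤ 1 / y) (hty : 1 ≤ t * y) :
    y ^ (2 - γ) * L (1 / y) ≤ C * (t * y) ^ (δ - γ) * y ^ 2 * (t ^ γ * L t) := by
  have ht : 0 < t := pos_of_mul_pos_left (one_pos.trans_le hty) hy.le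
  have hLy := hP (1 / y) t hMy ((div_le_iff₀ hy).2 hty)
  rw [div_div_eq_mul_div, div_one] at hLy
  have hsplit : (t * y) ^ δ = (t * y) ^ (δ - γ) * (t ^ γ * y ^ γ) := by
    rw [← Real.mul_rpow ht.le hy.le, ← Real.rpow_add (by positivity), sub_add_cancel]
  have hy2 : y ^ (2 - γ) * y ^ γ = y ^ 2 := by
    rw [← Real.rpow_add hy, sub_add_cancel, Real.rpow_two]
  calc y ^ (2 - γ) * L (1 / y) ≤ y ^ (2 - γ) * (C * (t * y) ^ δ * L t) := by gcongr
    _ = C * (t * y) ^ (δ - γ) * y ^ 2 * (t ^ γ * L t) := by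
      rw [hsplit, ← hy2]; ring

end Potter

lemma sum_range_rpow_two_pow_mul_le {s A : ℝ} (hs : s < 0) (hA : 0 < A) (K : ℕ) :
    ∑ k ∈ Finset.range K, ((2 : ℝ) ^ (k + 1) * A) ^ s ≤ A ^ s / (1 - 2 ^ s) := by
  have hr0 : 0 < (2 : ℝ) ^ s := by positivity
  have hr1 : (2 : ℝ) ^ s < 1 := Real.rpow_lt_one_of_one_lt_of_neg one_lt_two hs
  calc ∑ k ∈ Finset.range K, ((2 : ℝ) ^ (k + 1) * A) ^ s
      = ∑ k ∈ Finset.range K, A ^ s * ((2 : ℝ) ^ s) ^ (k + 1) := by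
        refine Finset.sum_congr rfl fun k _ => ?_
        rw [Real.mul_rpow (by positivity) hA.le, Real.rpow_pow_comm zero_le_two, mul_comm]
    _ ≤ ∑ k ∈ Finset.range K, A ^ s * ((2 : ℝ) ^ s) ^ k :=
        Finset.sum_le_sum fun k _ => mul_le_mul_of_nonneg_left
          (pow_le_pow_of_le_one hr0.le hr1.le (Nat.le_succ k)) (by positivity)
    _ = A ^ s * ∑ k ∈ Finset.range K, ((2 : ℝ) ^ s) ^ k := (Finset.mul_sum ..).symm
    _ ≤ A ^ s * (((2 : ℝ) ^ s) ^ 0 / (1 - 2 ^ s)) := by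
        rw [Finset.range_eq_Ico]
        exact mul_le_mul_of_nonneg_left (geom_sum_Ico_le_of_lt_one hr0.le hr1) (by positivity)
    _ = A ^ s / (1 - 2 ^ s) := by ring

section VarianceUpperBound

variable {μ : Measure ℝ} {L : ℝ → ℝ} {γ δ M C C₁ : ℝ}

lemma sum_dyadic_specG_le
    (hG : ∀ x : ℝ, 0 < x → x ≤ Real.pi → specG μ x ≤ C₁ * x ^ (2 - γ) * L (1 / x))
    (hC₁ : 0 ≤ C₁) (hP : ∀ x y, M ≤ x → x ≤ y → L x ≤ C * (y / x) ^ δ * L y) (hC : 0 ≤ C)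
    (hδγ : δ < γ) {A t : ℝ} (hA : 1 ≤ A) (ht : 0 < t) (hLt : 0 ≤ L t) {K : ℕ}
    (hKπ : 2 ^ K * (A / t) ≤ Real.pi) (hKM : M ≤ 1 / (2 ^ K * (A / t))) :
    ∑ k ∈ Finset.range K, Real.pi ^ 2 / (2 ^ k * (A / t)) ^ 2 * specG μ (2 ^ (k + 1) * (A / t))
      ≤ 4 * Real.pi ^ 2 * C₁ * C / (1 - 2 ^ (δ - γ)) * A ^ (δ - γ) * (t ^ γ * L t) := by
  have hA0 : 0 < A := one_pos.trans_le hA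
  have hterm : ∀ k ∈ Finset.range K,
      Real.pi ^ 2 / (2 ^ k * (A / t)) ^ 2 * specG μ (2 ^ (k + 1) * (A / t))
        ≤ 4 * Real.pi ^ 2 * C₁ * C * (t ^ γ * L t) * ((2 : ℝ) ^ (k + 1) * A) ^ (δ - γ) := by
    intro k hk
    set y : ℝ := 2 ^ (k + 1) * (A / t)
    have hy : 0 < y := by positivity
    have hyK : y ≤ 2 ^ K * (A / t) :=
      mul_le_mul_of_nonneg_right (pow_le_pow_right₀ one_le_two (Finset.mem_range.1 hk))
        (by positivity)
    have hty : t * y = 2 ^ (k + 1) * A := by simp only [y]; field_simp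
    have hpot := rpow_mul_le_of_potter (γ := γ) hP hy
      (hKM.trans (one_div_le_one_div_of_le hy hyK))
      (hty ▸ one_le_mul_of_one_le_of_one_le (one_le_pow₀ one_le_two) hA)
    calc Real.pi ^ 2 / (2 ^ k * (A / t)) ^ 2 * specG μ y
        ≤ Real.pi ^ 2 / (2 ^ k * (A / t)) ^ 2 *
            (C₁ * (C * (t * y) ^ (δ - γ) * y ^ 2 * (t ^ γ * L t))) := by
          gcongr
          exact (hG y hy (hyK.trans hKπ)).trans (by rw [mul_assoc]; gcongr)
      _ = 4 * Real.pi ^ 2 * C₁ * C * (t ^ γ * L t) * ((2 : ℝ) ^ (k + 1) * A) ^ (δ - γ) := by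
          rw [hty]; simp only [y]; field_simp; ring
  have hr1 : (2 : ℝ) ^ (δ - γ) < 1 := Real.rpow_lt_one_of_one_lt_of_neg one_lt_two (by linarith)
  calc _ ≤ ∑ k ∈ Finset.range K,
        4 * Real.pi ^ 2 * C₁ * C * (t ^ γ * L t) * ((2 : ℝ) ^ (k + 1) * A) ^ (δ - γ) :=
        Finset.sum_le_sum hterm
    _ = 4 * Real.pi ^ 2 * C₁ * C * (t ^ γ * L t) *
          ∑ k ∈ Finset.range K, ((2 : ℝ) ^ (k + 1) * A) ^ (δ - γ) := (Finset.mul_sum ..).symm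
    _ ≤ 4 * Real.pi ^ 2 * C₁ * C * (t ^ γ * L t) * (A ^ (δ - γ) / (1 - 2 ^ (δ - γ))) := by
        gcongr
        exact sum_range_rpow_two_pow_mul_le (by linarith) hA0 K
    _ = _ := by ring

theorem eventually_varV_le [IsFiniteMeasure μ]
    (hG : ∀ x : ℝ, 0 < x → x ≤ Real.pi → specG μ x ≤ C₁ * x ^ (2 - γ) * L (1 / x))
    (hC₁ : 0 ≤ C₁) (hP : ∀ x y, M ≤ x → x ≤ y → L x ≤ C * (y / x) ^ δ * L y) (hM : 0 < M)
    (hC : 0 ≤ C) (hδγ : δ < γ) (hLpos : ∀ x > (0 : ℝ), 0 < L x)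
    (hgrow : Tendsto (fun n : ℕ => (n : ℝ) ^ γ * L n) atTop atTop) {ε : ℝ} (hε : 0 < ε) :
    ∃ A ≥ 1, ∀ᶠ n : ℕ in atTop, varV μ n ≤ n ^ 2 * specG μ (A / n) + ε * (n ^ γ * L n) := by
  set B := 4 * Real.pi ^ 2 * C₁ * C / (1 - 2 ^ (δ - γ))
  have hBA : Tendsto (fun A : ℝ => B * A ^ (δ - γ)) atTop (𝓝 0) := by
    simpa [neg_sub] using (tendsto_rpow_neg_atTop (sub_pos.2 hδγ)).const_mul B
  obtain ⟨A, hA, hAε⟩ :=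
    ((eventually_ge_atTop 1).and (hBA.eventually_lt_const (half_pos hε))).exists
  refine ⟨A, hA, ?_⟩
  -- Below `c` the Potter bound applies to `L (1 / y)`; above it the kernel is `O(1)`.
  set c := min Real.pi (1 / M)
  have hc : 0 < c := lt_min Real.pi_pos (by positivity)
  filter_upwards [tendsto_natCast_atTop_atTop.eventually_ge_atTop (A / c),
    (hgrow.const_mul_atTop (half_pos hε)).eventually_ge_atTop
      (Real.pi ^ 2 / (c / 2) ^ 2 * specG μ Real.pi)] with n hnc htail
  have hn : 0 < (n : ℝ) := (by positivity : 0 < A / c).trans_le hnc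
  have ha : 0 < A / n := by positivity
  have hac : A / n ≤ c := by
    rw [div_le_iff₀ hc] at hnc
    rw [div_le_iff₀ hn]
    linarith
  obtain ⟨K, hKc, hcK⟩ := exists_nat_pow_near ((one_le_div ha).2 hac) one_lt_two
  rw [le_div_iff₀ ha] at hKc
  rw [div_lt_iff₀ ha, pow_succ] at hcK
  have hmid := sum_dyadic_specG_le (μ := μ) hG hC₁ hP hC hδγ hA hn (hLpos n hn).le
    (hKc.trans (min_le_left _ _))
    ((le_one_div (by positivity) hM).1 (hKc.trans (min_le_right _ _)))
  have htail' : Real.pi ^ 2 / (2 ^ K * (A / n)) ^ 2 * specG μ Real.pi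
      ≤ Real.pi ^ 2 / (c / 2) ^ 2 * specG μ Real.pi := by
    gcongr
    · exact ENNReal.toReal_nonneg
    · linarith
  have hmid' : B * A ^ (δ - γ) * (n ^ γ * L n) ≤ ε / 2 * (n ^ γ * L n) :=
    mul_le_mul_of_nonneg_right hAε.le (by have := hLpos n hn; positivity)
  linarith [varV_le_dyadic (μ := μ) n ha (hKc.trans (min_le_left _ _))]

end VarianceUpperBound

lemma exists_rpow_mul_le_of_eventually_le {G L : ℝ → ℝ} {γ δ M C A c : ℝ} (hGmono : Monotone G)
    (hP : ∀ x y, M ≤ x → x ≤ y → L x ≤ C * (y / x) ^ δ * L y) (hM : 0 < M) (hC : 0 < C)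
    (hδγ : δ ≤ γ) (hLpos : ∀ x > (0 : ℝ), 0 < L x) (hA : 1 ≤ A) (hc : 0 < c)
    (h : ∀ᶠ n : ℕ in atTop, c * (n ^ γ * L n) ≤ n ^ 2 * G (A / n)) :
    ∃ C₃ > (0 : ℝ), ∃ x₀ > (0 : ℝ), ∀ x : ℝ, 0 < x → x ≤ x₀ →
      C₃ * x ^ (2 - γ) * L (1 / x) ≤ G x := by
  obtain ⟨N, hN⟩ := eventually_atTop.1 h
  have hA0 : 0 < A := one_pos.trans_le hA
  refine ⟨c / (C * A ^ (δ - γ) * (2 * A) ^ 2), by positivity, min (A / (N + 1)) (1 / M),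
    by positivity, fun x hx hxx₀ => ?_⟩
  set n := ⌈A / x⌉₊
  have hNx : (N : ℝ) + 1 ≤ A / x := by
    have hxA : x ≤ A / (N + 1) := hxx₀.trans (min_le_left _ _)
    rw [le_div_iff₀ (by positivity)] at hxA
    rw [le_div_iff₀ hx]
    linarith
  have hn_ge : A / x ≤ n := Nat.le_ceil _
  have hn : 0 < (n : ℝ) := by linarith
  have hAnx : A ≤ n * x := (div_le_iff₀ hx).1 hn_ge
  have hn_lt : (n : ℝ) < A / x + 1 := Nat.ceil_lt_add_one (by positivity)
  have hnx2A : n * x ≤ 2 * A := (le_div_iff₀ hx).1 (by rw [mul_div_assoc]; linarith)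
  have hkey := hN n (by exact_mod_cast (by linarith : (N : ℝ) ≤ n))
  have hGx : G (A / n) ≤ G x := hGmono ((div_le_iff₀ hn).2 (by linarith))
  have hpot := rpow_mul_le_of_potter (γ := γ) hP hx
    ((le_one_div hx hM).1 (hxx₀.trans (min_le_right _ _))) (hA.trans hAnx)
  have hLn : 0 < L n := hLpos n hn
  have hnxδ : (n * x) ^ (δ - γ) ≤ A ^ (δ - γ) :=
    Real.rpow_le_rpow_of_nonpos hA0 hAnx (sub_nonpos.2 hδγ)
  refine le_of_mul_le_mul_right ?_ (pow_pos hn 2)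
  calc c / (C * A ^ (δ - γ) * (2 * A) ^ 2) * x ^ (2 - γ) * L (1 / x) * n ^ 2
      ≤ c / (C * A ^ (δ - γ) * (2 * A) ^ 2) *
          (C * (n * x) ^ (δ - γ) * x ^ 2 * (n ^ γ * L n)) * n ^ 2 := by
        rw [mul_assoc _ (x ^ (2 - γ))]; gcongr
    _ = c / (C * A ^ (δ - γ) * (2 * A) ^ 2) * (C * (n * x) ^ (δ - γ) * (n * x) ^ 2)
          * (n ^ γ * L n) := by ring
    _ ≤ c / (C * A ^ (δ - γ) * (2 * A) ^ 2) * (C * A ^ (δ - γ) * (2 * A) ^ 2)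
          * (n ^ γ * L n) := by
        gcongr
    _ = c * (n ^ γ * L n) := by field_simp
    _ ≤ G x * n ^ 2 := by nlinarith [hkey, hGx]

theorem spectral_lower_of_variance_lower_general (μ : Measure ℝ) [IsFiniteMeasure μ]
    (γ : ℝ) (hγ : γ ∈ Ioo (0 : ℝ) 2)
    (L : ℝ → ℝ) (hLmeas : Measurable L) (hLpos : ∀ x > (0 : ℝ), 0 < L x)
    (hL : SlowlyVarying L)
    (C₁ C₂ : ℝ) (hC₁ : 0 < C₁) (hC₂ : 0 < C₂)
    (hG : ∀ x : ℝ, 0 < x → x ≤ Real.pi → specG μ x ≤ C₁ * x ^ (2 - γ) * L (1 / x))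
    (hV : ∀ n : ℕ, 1 ≤ n → C₂ * (n : ℝ) ^ γ * L n ≤ varV μ n) :
    ∃ C₃ > (0 : ℝ), ∃ x₀ > (0 : ℝ), ∀ x : ℝ, 0 < x → x ≤ x₀ →
      C₃ * x ^ (2 - γ) * L (1 / x) ≤ specG μ x := by
  have hδγ : γ / 2 < γ := half_lt_self hγ.1
  obtain ⟨M, hM, C, hC, hP⟩ := hL.exists_potter_bound hLmeas hLpos (half_pos hγ.1)
  have hgrow := (tendsto_rpow_mul_atTop_of_potter hP hM hC (hLpos M hM) hδγ).comp
    tendsto_natCast_atTop_atTop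
  obtain ⟨A, hA, hVle⟩ :=
    eventually_varV_le hG hC₁.le hP hM hC.le hδγ hLpos hgrow (half_pos hC₂)
  refine exists_rpow_mul_le_of_eventually_le (specG_mono μ) hP hM hC hδγ.le hLpos hA
    (half_pos hC₂) ?_
  filter_upwards [hVle, eventually_ge_atTop 1] with n hVn hn
  linarith [hV n hn]

/-- If `G(x) ≤ C₁ x^{2-γ} L(1/x)` on `(0,π]` and `V(n) ≥ C₂ n^γ L(n)` for all `n ≥ 1`,
then `G(x) ≥ C₃ x^{2-γ} L(1/x)` near the origin. -/
theorem spectral_lower_of_variance_lower (μ : Measure ℝ) [IsFiniteMeasure μ]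
    (hsupp : μ (Icc 0 Real.pi)ᶜ = 0)
    (γ : ℝ) (hγ : γ ∈ Ioo (0 : ℝ) 2)
    (L : ℝ → ℝ) (hLmeas : Measurable L) (hLpos : ∀ x > (0 : ℝ), 0 < L x)
    (hL : SlowlyVarying L)
    (C₁ C₂ : ℝ) (hC₁ : 0 < C₁) (hC₂ : 0 < C₂)
    (hG : ∀ x : ℝ, 0 < x → x ≤ Real.pi → specG μ x ≤ C₁ * x ^ (2 - γ) * L (1 / x))
    (hV : ∀ n : ℕ, 1 ≤ n → C₂ * (n : ℝ) ^ γ * L n ≤ varV μ n) :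
    ∃ C₃ > (0 : ℝ), ∃ x₀ > (0 : ℝ), ∀ x : ℝ, 0 < x → x ≤ x₀ →
      C₃ * x ^ (2 - γ) * L (1 / x) ≤ specG μ x :=
  spectral_lower_of_variance_lower_general μ γ hγ L hLmeas hLpos hL C₁ C₂ hC₁ hC₂ hG hV
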